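/- (Beale–Kato–Majda criterion for the sabra model) Let u ∈ C¹([0, T*), V_d), d ≥ 1, be the maximal solution of the unforced inviscid sabra shell model. If T* < ∞ then ∫₀ᵗ ‖u(τ)‖_{w^{1,∞}} dτ → ∞ as t → T*⁻, and in particular limsup_{t→T*⁻} ‖u(t)‖_{w^{1,∞}} = ∞. -/

import Mathlib

open Complex Filter

/-- Wavenumbers of the sabra shell model: `k n = k0 * λ^n`. -/
noncomputable def kk (k0 lam : ℝ) (n : ℤ) : ℝ := k0 * lam ^ n

/-- Nonlinear term of the sabra shell model. -/
noncomputable def sB (a b c k0 lam : ℝ) (u : ℤ → ℂ) (n : ℤ) : ℂ :=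
  -Complex.I * ((a : ℂ) * (kk k0 lam (n + 1) : ℝ) * u (n + 2) * (starRingEnd ℂ) (u (n + 1))
    + (b : ℂ) * (kk k0 lam n : ℝ) * u (n + 1) * (starRingEnd ℂ) (u (n - 1))
    - (c : ℂ) * (kk k0 lam (n - 1) : ℝ) * u (n - 1) * u (n - 2))

/-- The `V_r` norm `|u|_r`. -/
noncomputable def AH (k0 lam r : ℝ) (u : ℤ → ℂ) : ℝ :=
  Real.sqrt (∑' n : ℕ, (kk k0 lam ((n : ℤ) + 1)) ^ (2 * r) * ‖u ((n : ℤ) + 1)‖ ^ 2)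

/-- The `w^{1,∞}` norm `sup_n k_n |u_n|`. -/
noncomputable def W1 (k0 lam : ℝ) (v : ℤ → ℂ) : ℝ :=
  ⨆ n : ℕ, kk k0 lam ((n : ℤ) + 1) * ‖v ((n : ℤ) + 1)‖

/-- A `C¹` solution of the unforced inviscid sabra shell model on `[0, T*)` with values
in `V_d`. -/
def IsSolutionOnIco (a b c k0 lam d Tstar : ℝ) (u : ℝ → ℤ → ℂ) : Prop :=
  (∀ t : ℝ, ∀ n : ℤ, n ≤ 0 → u t n = 0) ∧
  (∀ t ∈ Set.Ico (0 : ℝ) Tstar,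
    (Summable fun n : ℕ =>
      (kk k0 lam ((n : ℤ) + 1)) ^ (2 * d) * ‖u t ((n : ℤ) + 1)‖ ^ 2) ∧
    ∀ n : ℤ, 1 ≤ n → HasDerivAt (fun s => u s n) (-sB a b c k0 lam (u t) n) t) ∧
  ContinuousOn (fun t => ∑' n : ℕ,
    (kk k0 lam ((n : ℤ) + 1)) ^ (2 * d) * ‖u t ((n : ℤ) + 1)‖ ^ 2)
    (Set.Ico (0 : ℝ) Tstar)

private lemma hasDerivAt_norm_sq' {f : ℝ → ℂ} {f' : ℂ} {t : ℝ} (hf : HasDerivAt f f' t) :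
    HasDerivAt (fun s => ‖f s‖ ^ 2) (2 * (f t).re * f'.re + 2 * (f t).im * f'.im) t := by
  have hre : HasDerivAt (fun s => (f s).re) f'.re t :=
    (Complex.reCLM.hasFDerivAt.comp_hasDerivAt t hf)
  have him : HasDerivAt (fun s => (f s).im) f'.im t :=
    (Complex.imCLM.hasFDerivAt.comp_hasDerivAt t hf)
  have h : HasDerivAt (fun s => (f s).re ^ 2 + (f s).im ^ 2) _ t := (hre.pow 2).add (him.pow 2)
  have hfun : (fun s => ‖f s‖ ^ 2) = fun s => (f s).re ^ 2 + (f s).im ^ 2 := by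
    funext s
    rw [Complex.sq_norm, Complex.normSq_apply]
    ring
  rw [hfun]
  convert h using 1
  ring

private lemma re_pair_bound (z w : ℂ) :
    2 * z.re * w.re + 2 * z.im * w.im ≤ 2 * (‖z‖ * ‖w‖) := by
  have h1 : ((starRingEnd ℂ) z * w).re = z.re * w.re + z.im * w.im := by
    simp [Complex.mul_re]
  have h2 := Complex.abs_re_le_norm ((starRingEnd ℂ) z * w)
  have h3 : ‖(starRingEnd ℂ) z * w‖ = ‖z‖ * ‖w‖ := by
    rw [norm_mul, Complex.norm_conj]
  have h4 : z.re * w.re + z.im * w.im ≤ ‖z‖ * ‖w‖ := by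
    calc z.re * w.re + z.im * w.im ≤ |z.re * w.re + z.im * w.im| := le_abs_self _
    _ = |((starRingEnd ℂ) z * w).re| := by rw [h1]
    _ ≤ ‖z‖ * ‖w‖ := by rw [← h3]; exact h2
  linarith

private lemma shift_sum {E : ℕ → ℝ} (hE : Summable E) (hE0 : ∀ n, 0 ≤ E n)
    (cZ : ℤ → ℝ) (hc1 : ∀ n : ℕ, cZ ((n : ℤ) + 1) = E n)
    (hc0 : ∀ m : ℤ, m ≤ 0 → cZ m = 0) (j : ℤ) (N : ℕ) :
    ∑ n ∈ Finset.range N, cZ ((n : ℤ) + 1 + j) ≤ ∑' n, E n := by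
  classical
  set F := Finset.filter (fun n : ℕ => 0 ≤ (n : ℤ) + j) (Finset.range N) with hF
  have hsub : ∑ n ∈ Finset.range N, cZ ((n : ℤ) + 1 + j) = ∑ n ∈ F, cZ ((n : ℤ) + 1 + j) := by
    refine (Finset.sum_filter_of_ne ?_).symm
    intro n hn h
    by_contra hneg
    simp only [not_le] at hneg
    exact h (hc0 _ (by omega))
  rw [hsub]
  have heq : ∀ n ∈ F, cZ ((n : ℤ) + 1 + j) = E ((n : ℤ) + j).toNat := by
    intro n hn
    have h0 : 0 ≤ (n : ℤ) + j := (Finset.mem_filter.mp hn).2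
    have h1 : (n : ℤ) + 1 + j = ((((n : ℤ) + j).toNat : ℤ)) + 1 := by omega
    rw [h1, hc1]
  rw [Finset.sum_congr rfl heq]
  have hinj : ∀ x ∈ F, ∀ y ∈ F, ((x : ℤ) + j).toNat = ((y : ℤ) + j).toNat → x = y := by
    intro x hx y hy hxy
    have hx0 : 0 ≤ (x : ℤ) + j := (Finset.mem_filter.mp hx).2
    have hy0 : 0 ≤ (y : ℤ) + j := (Finset.mem_filter.mp hy).2
    omega
  rw [← Finset.sum_image hinj]
  exact Summable.sum_le_tsum _ (fun i _ => hE0 i) hE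

set_option maxHeartbeats 2000000 in
/-- Beale–Kato–Majda criterion: if the maximal time `T* < ∞` of a
solution `u ∈ C¹([0,T*), V_d)` (`d ≥ 1`) of the unforced inviscid sabra shell model is
finite (i.e. `limsup_{t→T*⁻} |u(t)|_d = ∞`), then `∫₀ᵗ ‖u(τ)‖_{w^{1,∞}} dτ → ∞` as
`t → T*⁻`, and in particular `limsup_{t→T*⁻} ‖u(t)‖_{w^{1,∞}} = ∞`. -/
theorem sabra_beale_kato_majda
    (a b c k0 lam : ℝ) (hk0 : 0 < k0) (hlam : 1 < lam) (habc : a + b + c = 0)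
    (d : ℝ) (hd : 1 ≤ d) (Tstar : ℝ) (hTstar : 0 < Tstar)
    (u : ℝ → ℤ → ℂ) (hsol : IsSolutionOnIco a b c k0 lam d Tstar u)
    -- blow-up of the V_d norm at the (finite) maximal time T*
    (hmax : ∀ M : ℝ, ∃ t ∈ Set.Ico (0 : ℝ) Tstar, M < AH k0 lam d (u t)) :
    Tendsto (fun t => ∫ τ in (0 : ℝ)..t, W1 k0 lam (u τ))
      (nhdsWithin Tstar (Set.Iio Tstar)) atTop ∧
    ∀ M : ℝ, ∃ t ∈ Set.Ico (0 : ℝ) Tstar, M < W1 k0 lam (u t) := by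
  obtain ⟨hzero, hde, hcont⟩ := hsol
  have hlam0 : (0:ℝ) < lam := lt_trans one_pos hlam
  have hlam1 : (1:ℝ) ≤ lam := le_of_lt hlam
  have hd0 : (0:ℝ) ≤ d := by linarith
  have hkpos : ∀ m : ℤ, 0 < kk k0 lam m := fun m => mul_pos hk0 (zpow_pos hlam0 m)
  have hkmono : ∀ {m n : ℤ}, m ≤ n → kk k0 lam m ≤ kk k0 lam n := fun {m n} h =>
    mul_le_mul_of_nonneg_left (zpow_le_zpow_right₀ hlam1 h) (le_of_lt hk0)
  have hkstep : ∀ m : ℤ, kk k0 lam m = lam * kk k0 lam (m - 1) := by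
    intro m
    unfold kk
    have h : lam ^ m = lam * lam ^ (m - 1) := by
      conv_lhs => rw [show m = m - 1 + 1 by ring]
      rw [zpow_add_one₀ (ne_of_gt hlam0) (m - 1)]
      ring
    rw [h]
    ring
  set Ts := Set.Ico (0:ℝ) Tstar with hTs
  set E : ℝ → ℕ → ℝ :=
    fun t n => (kk k0 lam ((n : ℤ) + 1)) ^ (2 * d) * ‖u t ((n : ℤ) + 1)‖ ^ 2 with hEdef
  set y : ℝ → ℝ := fun t => ∑' n, E t n with hydef
  set q : ℝ → ℤ → ℝ := fun t m => (kk k0 lam m) ^ d * ‖u t m‖ with hqdef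
  set cf : ℝ → ℤ → ℝ := fun t m => (kk k0 lam m) ^ (2 * d) * ‖u t m‖ ^ 2 with hcfdef
  have hE0 : ∀ t n, 0 ≤ E t n :=
    fun t n => mul_nonneg (Real.rpow_nonneg (hkpos _).le _) (sq_nonneg _)
  have hcf0 : ∀ t m, 0 ≤ cf t m :=
    fun t m => mul_nonneg (Real.rpow_nonneg (hkpos _).le _) (sq_nonneg _)
  have hcfz : ∀ t (m : ℤ), m ≤ 0 → cf t m = 0 := by
    intro t m hm
    simp only [hcfdef, hzero t m hm, norm_zero]
    ring
  have hq0 : ∀ t m, 0 ≤ q t m :=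
    fun t m => mul_nonneg (Real.rpow_nonneg (hkpos _).le _) (norm_nonneg _)
  have hq2 : ∀ t m, q t m ^ 2 = cf t m := by
    intro t m
    simp only [hqdef, hcfdef]
    rw [mul_pow, ← Real.rpow_natCast ((kk k0 lam m) ^ d) 2, ← Real.rpow_mul (hkpos m).le,
      show d * ((2 : ℕ) : ℝ) = 2 * d by push_cast; ring]
  have hEsum : ∀ t ∈ Ts, Summable (E t) := fun t ht => (hde t ht).1
  have hy0 : ∀ t, 0 ≤ y t := fun t => tsum_nonneg (hE0 t)
  have hyCont : ContinuousOn y Ts := hcont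
  have hEc : ∀ t (n : ℕ), cf t ((n : ℤ) + 1) = E t n := fun t n => rfl
  have hucont : ∀ m : ℤ, ContinuousOn (fun τ => u τ m) Ts := by
    intro m
    rcases le_or_gt m 0 with h | h
    · have he : (fun τ => u τ m) = fun _ => (0 : ℂ) := funext (fun τ => hzero τ m h)
      rw [he]; exact continuousOn_const
    · intro τ hτ
      exact ((hde τ hτ).2 m h).continuousAt.continuousWithinAt
  -- W1 facts
  have hWub : ∀ t ∈ Ts, ∀ m : ℤ, 1 ≤ m →
      kk k0 lam m * ‖u t m‖ ≤ kk k0 lam 1 ^ (1 - d) * Real.sqrt (y t) := by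
    intro t ht m hm
    have h1 : kk k0 lam m * ‖u t m‖ = kk k0 lam m ^ (1 - d) * q t m := by
      simp only [hqdef]
      rw [← mul_assoc, ← Real.rpow_add (hkpos m)]
      norm_num
    have h2 : kk k0 lam m ^ (1 - d) ≤ kk k0 lam 1 ^ (1 - d) :=
      Real.rpow_le_rpow_of_nonpos (hkpos 1) (hkmono hm) (by linarith)
    have h3 : q t m ≤ Real.sqrt (y t) := by
      have hle : q t m ^ 2 ≤ y t := by
        rw [hq2]
        have hm1 : ((m - 1).toNat : ℤ) + 1 = m := by omega
        rw [← hm1, hEc]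
        exact Summable.le_tsum (hEsum t ht) _ (fun j _ => hE0 t j)
      calc q t m = Real.sqrt (q t m ^ 2) := (Real.sqrt_sq (hq0 t m)).symm
      _ ≤ Real.sqrt (y t) := Real.sqrt_le_sqrt hle
    rw [h1]
    exact mul_le_mul h2 h3 (hq0 t m) (Real.rpow_nonneg (hkpos 1).le _)
  have hWbdd : ∀ t ∈ Ts,
      BddAbove (Set.range fun n : ℕ => kk k0 lam ((n : ℤ) + 1) * ‖u t ((n : ℤ) + 1)‖) := by
    intro t ht
    refine ⟨kk k0 lam 1 ^ (1 - d) * Real.sqrt (y t), ?_⟩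
    rintro x ⟨n, rfl⟩
    exact hWub t ht _ (by omega)
  have hWge : ∀ t ∈ Ts, ∀ m : ℤ, 1 ≤ m → kk k0 lam m * ‖u t m‖ ≤ W1 k0 lam (u t) := by
    intro t ht m hm
    have hm1 : ((m - 1).toNat : ℤ) + 1 = m := by omega
    have h := le_ciSup (hWbdd t ht) (m - 1).toNat
    rw [hm1] at h
    exact h
  have hWle : ∀ t ∈ Ts, W1 k0 lam (u t) ≤ kk k0 lam 1 ^ (1 - d) * Real.sqrt (y t) := by
    intro t ht
    exact ciSup_le (fun n => hWub t ht _ (by omega))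
  have hW0 : ∀ t, 0 ≤ W1 k0 lam (u t) :=
    fun t => Real.iSup_nonneg (fun n => mul_nonneg (hkpos _).le (norm_nonneg _))
  -- norm bound on sB
  have hsBnorm : ∀ (v : ℤ → ℂ) (m : ℤ), ‖sB a b c k0 lam v m‖ ≤
      |a| * (kk k0 lam (m + 1) * (‖v (m + 2)‖ * ‖v (m + 1)‖))
      + |b| * (kk k0 lam m * (‖v (m + 1)‖ * ‖v (m - 1)‖))
      + |c| * (kk k0 lam (m - 1) * (‖v (m - 1)‖ * ‖v (m - 2)‖)) := by
    intro v m
    unfold sB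
    rw [norm_mul]
    have hI : ‖-Complex.I‖ = 1 := by simp
    rw [hI, one_mul]
    have e1 : ‖(a : ℂ) * (kk k0 lam (m + 1) : ℝ) * v (m + 2) * (starRingEnd ℂ) (v (m + 1))‖
        = |a| * (kk k0 lam (m + 1) * (‖v (m + 2)‖ * ‖v (m + 1)‖)) := by
      simp only [norm_mul, Complex.norm_real, RCLike.norm_conj, Real.norm_eq_abs,
        abs_of_pos (hkpos (m + 1))]
      try ring
    have e2 : ‖(b : ℂ) * (kk k0 lam m : ℝ) * v (m + 1) * (starRingEnd ℂ) (v (m - 1))‖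
        = |b| * (kk k0 lam m * (‖v (m + 1)‖ * ‖v (m - 1)‖)) := by
      simp only [norm_mul, Complex.norm_real, RCLike.norm_conj, Real.norm_eq_abs,
        abs_of_pos (hkpos m)]
      try ring
    have e3 : ‖(c : ℂ) * (kk k0 lam (m - 1) : ℝ) * v (m - 1) * v (m - 2)‖
        = |c| * (kk k0 lam (m - 1) * (‖v (m - 1)‖ * ‖v (m - 2)‖)) := by
      simp only [norm_mul, Complex.norm_real, Real.norm_eq_abs, abs_of_pos (hkpos (m - 1))]
      try ring
    calc ‖(a : ℂ) * (kk k0 lam (m + 1) : ℝ) * v (m + 2) * (starRingEnd ℂ) (v (m + 1))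
          + (b : ℂ) * (kk k0 lam m : ℝ) * v (m + 1) * (starRingEnd ℂ) (v (m - 1))
          - (c : ℂ) * (kk k0 lam (m - 1) : ℝ) * v (m - 1) * v (m - 2)‖
        ≤ ‖(a : ℂ) * (kk k0 lam (m + 1) : ℝ) * v (m + 2) * (starRingEnd ℂ) (v (m + 1))
          + (b : ℂ) * (kk k0 lam m : ℝ) * v (m + 1) * (starRingEnd ℂ) (v (m - 1))‖
          + ‖(c : ℂ) * (kk k0 lam (m - 1) : ℝ) * v (m - 1) * v (m - 2)‖ := norm_sub_le _ _
    _ ≤ ‖(a : ℂ) * (kk k0 lam (m + 1) : ℝ) * v (m + 2) * (starRingEnd ℂ) (v (m + 1))‖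
          + ‖(b : ℂ) * (kk k0 lam m : ℝ) * v (m + 1) * (starRingEnd ℂ) (v (m - 1))‖
          + ‖(c : ℂ) * (kk k0 lam (m - 1) : ℝ) * v (m - 1) * v (m - 2)‖ := by
        have := norm_add_le ((a : ℂ) * (kk k0 lam (m + 1) : ℝ) * v (m + 2) * (starRingEnd ℂ) (v (m + 1)))
          ((b : ℂ) * (kk k0 lam m : ℝ) * v (m + 1) * (starRingEnd ℂ) (v (m - 1)))
        linarith
    _ = _ := by rw [e1, e2, e3]
  -- derivative term of the weighted energy
  set Dt : ℝ → ℕ → ℝ := fun t n => (kk k0 lam ((n : ℤ) + 1)) ^ (2 * d) *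
    (2 * (u t ((n : ℤ) + 1)).re * (-sB a b c k0 lam (u t) ((n : ℤ) + 1)).re
      + 2 * (u t ((n : ℤ) + 1)).im * (-sB a b c k0 lam (u t) ((n : ℤ) + 1)).im) with hDtdef
  set Kc : ℝ := 2 * (|a| + |b| * lam ^ d + |c| * lam ^ (2 * d)) + 1 with hKcdef
  have hlamd : (0:ℝ) ≤ lam ^ d := Real.rpow_nonneg hlam0.le d
  have hlam2d : (0:ℝ) ≤ lam ^ (2 * d) := Real.rpow_nonneg hlam0.le _
  have hKc1 : (1:ℝ) ≤ Kc := by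
    have h1 : (0:ℝ) ≤ |a| := abs_nonneg a
    have h2 : (0:ℝ) ≤ |b| * lam ^ d := mul_nonneg (abs_nonneg b) hlamd
    have h3 : (0:ℝ) ≤ |c| * lam ^ (2 * d) := mul_nonneg (abs_nonneg c) hlam2d
    simp only [hKcdef]; linarith
  have hKc0 : (0:ℝ) ≤ Kc := by linarith
  have hknn : ∀ j : ℤ, (0:ℝ) ≤ kk k0 lam j := fun j => (hkpos j).le
  have hkd : ∀ j : ℤ, (0:ℝ) ≤ (kk k0 lam j) ^ d := fun j => Real.rpow_nonneg (hknn j) d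
  have hterm : ∀ t ∈ Ts, ∀ n : ℕ,
      Dt t n ≤ 2 * |a| * W1 k0 lam (u t) * (q t ((n:ℤ)+1) * q t ((n:ℤ)+1+2))
        + 2 * |b| * lam ^ d * W1 k0 lam (u t) * (q t ((n:ℤ)+1) * q t ((n:ℤ)+1-1))
        + 2 * |c| * lam ^ (2*d) * W1 k0 lam (u t) * (q t ((n:ℤ)+1) * q t ((n:ℤ)+1-2)) := by
    intro t ht n
    simp only [hDtdef, hqdef]
    set m : ℤ := (n : ℤ) + 1 with hmdef
    have hm1 : (1:ℤ) ≤ m := by omega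
    have hW0' : 0 ≤ W1 k0 lam (u t) := hW0 t
    have h2d : (kk k0 lam m) ^ (2*d) = (kk k0 lam m) ^ d * (kk k0 lam m) ^ d := by
      rw [← Real.rpow_add (hkpos m)]
      congr 1
      ring
    have h1 : (kk k0 lam m) ^ (2 * d) *
        (2 * (u t m).re * (-sB a b c k0 lam (u t) m).re
          + 2 * (u t m).im * (-sB a b c k0 lam (u t) m).im)
        ≤ (kk k0 lam m) ^ (2*d) * (2 * (‖u t m‖ * ‖sB a b c k0 lam (u t) m‖)) := by
      have hb := re_pair_bound (u t m) (-sB a b c k0 lam (u t) m)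
      rw [norm_neg] at hb
      exact mul_le_mul_of_nonneg_left hb (Real.rpow_nonneg (hknn m) _)
    have h3 : (kk k0 lam m) ^ (2 * d) *
        (2 * (u t m).re * (-sB a b c k0 lam (u t) m).re
          + 2 * (u t m).im * (-sB a b c k0 lam (u t) m).im)
        ≤ (kk k0 lam m) ^ (2*d) * (2 * (‖u t m‖ *
          (|a| * (kk k0 lam (m + 1) * (‖u t (m + 2)‖ * ‖u t (m + 1)‖))
          + |b| * (kk k0 lam m * (‖u t (m + 1)‖ * ‖u t (m - 1)‖))
          + |c| * (kk k0 lam (m - 1) * (‖u t (m - 1)‖ * ‖u t (m - 2)‖))))) := by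
      refine le_trans h1 ?_
      apply mul_le_mul_of_nonneg_left _ (Real.rpow_nonneg (hknn m) _)
      apply mul_le_mul_of_nonneg_left _ (by norm_num : (0:ℝ) ≤ 2)
      exact mul_le_mul_of_nonneg_left (hsBnorm (u t) m) (norm_nonneg _)
    have key1 : (kk k0 lam m) ^ (2*d) *
        (2 * (‖u t m‖ * (|a| * (kk k0 lam (m + 1) * (‖u t (m + 2)‖ * ‖u t (m + 1)‖)))))
        ≤ 2 * |a| * W1 k0 lam (u t) *
          ((kk k0 lam m ^ d * ‖u t m‖) * (kk k0 lam (m + 2) ^ d * ‖u t (m + 2)‖)) := by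
      have i1 : kk k0 lam (m + 1) * ‖u t (m + 1)‖ ≤ W1 k0 lam (u t) := hWge t ht (m+1) (by omega)
      have i2 : (kk k0 lam m)^(2*d) * (‖u t m‖ * ‖u t (m + 2)‖)
          ≤ (kk k0 lam m ^ d * ‖u t m‖) * (kk k0 lam (m + 2) ^ d * ‖u t (m + 2)‖) := by
        rw [h2d]
        have hle : (kk k0 lam m) ^ d ≤ (kk k0 lam (m + 2)) ^ d :=
          Real.rpow_le_rpow (hknn m) (hkmono (by omega)) hd0
        calc kk k0 lam m ^ d * kk k0 lam m ^ d * (‖u t m‖ * ‖u t (m + 2)‖)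
            = (kk k0 lam m ^ d * ‖u t m‖) * (kk k0 lam m ^ d * ‖u t (m + 2)‖) := by ring
        _ ≤ (kk k0 lam m ^ d * ‖u t m‖) * (kk k0 lam (m + 2) ^ d * ‖u t (m + 2)‖) := by
            apply mul_le_mul_of_nonneg_left _ (mul_nonneg (hkd m) (norm_nonneg _))
            exact mul_le_mul_of_nonneg_right hle (norm_nonneg _)
      calc (kk k0 lam m) ^ (2*d) *
          (2 * (‖u t m‖ * (|a| * (kk k0 lam (m + 1) * (‖u t (m + 2)‖ * ‖u t (m + 1)‖)))))
          = 2 * |a| * ((kk k0 lam (m + 1) * ‖u t (m + 1)‖) *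
            ((kk k0 lam m)^(2*d) * (‖u t m‖ * ‖u t (m + 2)‖))) := by ring
      _ ≤ 2 * |a| * (W1 k0 lam (u t) *
            ((kk k0 lam m ^ d * ‖u t m‖) * (kk k0 lam (m + 2) ^ d * ‖u t (m + 2)‖))) := by
          apply mul_le_mul_of_nonneg_left _ (by positivity)
          exact mul_le_mul i1 i2
            (mul_nonneg (Real.rpow_nonneg (hknn m) _)
              (mul_nonneg (norm_nonneg _) (norm_nonneg _))) hW0'
      _ = 2 * |a| * W1 k0 lam (u t) *
            ((kk k0 lam m ^ d * ‖u t m‖) * (kk k0 lam (m + 2) ^ d * ‖u t (m + 2)‖)) := by ring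
    have e2b : (kk k0 lam m) ^ (2*d) = lam ^ d * ((kk k0 lam m) ^ d * (kk k0 lam (m - 1)) ^ d) := by
      have h : kk k0 lam m = lam * kk k0 lam (m - 1) := hkstep m
      calc (kk k0 lam m)^(2*d) = (kk k0 lam m)^d * (kk k0 lam m)^d := h2d
      _ = (kk k0 lam m)^d * (lam * kk k0 lam (m - 1))^d := by rw [← h]
      _ = (kk k0 lam m)^d * (lam^d * (kk k0 lam (m - 1))^d) := by
          rw [Real.mul_rpow hlam0.le (hknn _)]
      _ = _ := by ring
    have key2 : (kk k0 lam m) ^ (2*d) *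
        (2 * (‖u t m‖ * (|b| * (kk k0 lam m * (‖u t (m + 1)‖ * ‖u t (m - 1)‖)))))
        ≤ 2 * |b| * lam ^ d * W1 k0 lam (u t) *
          ((kk k0 lam m ^ d * ‖u t m‖) * (kk k0 lam (m - 1) ^ d * ‖u t (m - 1)‖)) := by
      have i1 : kk k0 lam m * ‖u t (m + 1)‖ ≤ W1 k0 lam (u t) :=
        le_trans (mul_le_mul_of_nonneg_right (hkmono (by omega)) (norm_nonneg _))
          (hWge t ht (m+1) (by omega))
      calc (kk k0 lam m) ^ (2*d) *
          (2 * (‖u t m‖ * (|b| * (kk k0 lam m * (‖u t (m + 1)‖ * ‖u t (m - 1)‖)))))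
          = 2 * |b| * ((kk k0 lam m * ‖u t (m + 1)‖) *
            ((kk k0 lam m)^(2*d) * (‖u t m‖ * ‖u t (m - 1)‖))) := by ring
      _ ≤ 2 * |b| * (W1 k0 lam (u t) *
            ((kk k0 lam m)^(2*d) * (‖u t m‖ * ‖u t (m - 1)‖))) := by
          apply mul_le_mul_of_nonneg_left _ (by positivity)
          apply mul_le_mul_of_nonneg_right i1
          exact mul_nonneg (Real.rpow_nonneg (hknn m) _)
            (mul_nonneg (norm_nonneg _) (norm_nonneg _))
      _ = 2 * |b| * lam ^ d * W1 k0 lam (u t) *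
            ((kk k0 lam m ^ d * ‖u t m‖) * (kk k0 lam (m - 1) ^ d * ‖u t (m - 1)‖)) := by
          rw [e2b]; ring
    have key3 : (kk k0 lam m) ^ (2*d) *
        (2 * (‖u t m‖ * (|c| * (kk k0 lam (m - 1) * (‖u t (m - 1)‖ * ‖u t (m - 2)‖)))))
        ≤ 2 * |c| * lam ^ (2*d) * W1 k0 lam (u t) *
          ((kk k0 lam m ^ d * ‖u t m‖) * (kk k0 lam (m - 2) ^ d * ‖u t (m - 2)‖)) := by
      rcases eq_or_lt_of_le hm1 with heq | hlt
      · have hz : u t (m - 1) = 0 := hzero t (m - 1) (by omega)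
        rw [hz]
        simp only [norm_zero, mul_zero, zero_mul]
        exact mul_nonneg (mul_nonneg (by positivity) hW0')
          (mul_nonneg (mul_nonneg (hkd m) (norm_nonneg _))
            (mul_nonneg (hkd _) (norm_nonneg _)))
      · have e3b : (kk k0 lam m) ^ (2*d)
            = lam ^ (2*d) * ((kk k0 lam m) ^ d * (kk k0 lam (m - 2)) ^ d) := by
          have h : kk k0 lam m = lam * (lam * kk k0 lam (m - 2)) := by
            rw [hkstep m, hkstep (m - 1), show m - 1 - 1 = m - 2 by ring]
          have hll : lam ^ d * lam ^ d = lam ^ (2*d) := by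
            rw [← Real.rpow_add hlam0]; congr 1; ring
          calc (kk k0 lam m)^(2*d) = (kk k0 lam m)^d * (kk k0 lam m)^d := h2d
          _ = (kk k0 lam m)^d * ((lam * (lam * kk k0 lam (m - 2)))^d) := by rw [← h]
          _ = (kk k0 lam m)^d * (lam^d * (lam * kk k0 lam (m - 2))^d) := by
              rw [Real.mul_rpow hlam0.le (mul_nonneg hlam0.le (hknn _))]
          _ = (kk k0 lam m)^d * (lam^d * (lam^d * (kk k0 lam (m - 2))^d)) := by
              rw [Real.mul_rpow hlam0.le (hknn _)]
          _ = (lam^d * lam^d) * ((kk k0 lam m)^d * (kk k0 lam (m - 2))^d) := by ring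
          _ = lam^(2*d) * ((kk k0 lam m)^d * (kk k0 lam (m - 2))^d) := by rw [hll]
        have i1 : kk k0 lam (m - 1) * ‖u t (m - 1)‖ ≤ W1 k0 lam (u t) :=
          hWge t ht (m - 1) (by omega)
        calc (kk k0 lam m) ^ (2*d) *
            (2 * (‖u t m‖ * (|c| * (kk k0 lam (m - 1) * (‖u t (m - 1)‖ * ‖u t (m - 2)‖)))))
            = 2 * |c| * ((kk k0 lam (m - 1) * ‖u t (m - 1)‖) *
              ((kk k0 lam m)^(2*d) * (‖u t m‖ * ‖u t (m - 2)‖))) := by ring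
        _ ≤ 2 * |c| * (W1 k0 lam (u t) *
              ((kk k0 lam m)^(2*d) * (‖u t m‖ * ‖u t (m - 2)‖))) := by
            apply mul_le_mul_of_nonneg_left _ (by positivity)
            apply mul_le_mul_of_nonneg_right i1
            exact mul_nonneg (Real.rpow_nonneg (hknn m) _)
              (mul_nonneg (norm_nonneg _) (norm_nonneg _))
        _ = 2 * |c| * lam ^ (2*d) * W1 k0 lam (u t) *
              ((kk k0 lam m ^ d * ‖u t m‖) * (kk k0 lam (m - 2) ^ d * ‖u t (m - 2)‖)) := by
            rw [e3b]; ring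
    have hsplit : (kk k0 lam m) ^ (2*d) * (2 * (‖u t m‖ *
          (|a| * (kk k0 lam (m + 1) * (‖u t (m + 2)‖ * ‖u t (m + 1)‖))
          + |b| * (kk k0 lam m * (‖u t (m + 1)‖ * ‖u t (m - 1)‖))
          + |c| * (kk k0 lam (m - 1) * (‖u t (m - 1)‖ * ‖u t (m - 2)‖)))))
        = (kk k0 lam m) ^ (2*d) *
          (2 * (‖u t m‖ * (|a| * (kk k0 lam (m + 1) * (‖u t (m + 2)‖ * ‖u t (m + 1)‖)))))
        + (kk k0 lam m) ^ (2*d) *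
          (2 * (‖u t m‖ * (|b| * (kk k0 lam m * (‖u t (m + 1)‖ * ‖u t (m - 1)‖)))))
        + (kk k0 lam m) ^ (2*d) *
          (2 * (‖u t m‖ * (|c| * (kk k0 lam (m - 1) * (‖u t (m - 1)‖ * ‖u t (m - 2)‖))))) := by
      ring
    rw [hsplit] at h3
    linarith [key1, key2, key3, h3]
  have hDsum : ∀ t ∈ Ts, ∀ N : ℕ,
      ∑ n ∈ Finset.range N, Dt t n ≤ Kc * (W1 k0 lam (u t) * y t) := by
    intro t ht N
    have hW0' : 0 ≤ W1 k0 lam (u t) := hW0 t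
    have hS : ∀ j : ℤ, ∑ n ∈ Finset.range N, cf t ((n : ℤ) + 1 + j) ≤ y t :=
      fun j => shift_sum (hEsum t ht) (hE0 t) (cf t) (hEc t) (hcfz t) j N
    have S0 : ∑ n ∈ Finset.range N, cf t ((n : ℤ) + 1) ≤ y t := by
      have h := hS 0
      calc ∑ n ∈ Finset.range N, cf t ((n : ℤ) + 1)
          = ∑ n ∈ Finset.range N, cf t ((n : ℤ) + 1 + 0) :=
            Finset.sum_congr rfl (fun n _ => by norm_num)
      _ ≤ y t := h
    have S2 : ∑ n ∈ Finset.range N, cf t ((n : ℤ) + 1 + 2) ≤ y t := hS 2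
    have Sm1 : ∑ n ∈ Finset.range N, cf t ((n : ℤ) + 1 - 1) ≤ y t := by
      have h := hS (-1)
      calc ∑ n ∈ Finset.range N, cf t ((n : ℤ) + 1 - 1)
          = ∑ n ∈ Finset.range N, cf t ((n : ℤ) + 1 + (-1)) :=
            Finset.sum_congr rfl (fun n _ => by congr 1)
      _ ≤ y t := h
    have Sm2 : ∑ n ∈ Finset.range N, cf t ((n : ℤ) + 1 - 2) ≤ y t := by
      have h := hS (-2)
      calc ∑ n ∈ Finset.range N, cf t ((n : ℤ) + 1 - 2)
          = ∑ n ∈ Finset.range N, cf t ((n : ℤ) + 1 + (-2)) :=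
            Finset.sum_congr rfl (fun n _ => by congr 1)
      _ ≤ y t := h
    have step : ∀ n ∈ Finset.range N, Dt t n ≤
        |a| * W1 k0 lam (u t) * (cf t ((n:ℤ)+1) + cf t ((n:ℤ)+1+2))
        + |b| * lam ^ d * W1 k0 lam (u t) * (cf t ((n:ℤ)+1) + cf t ((n:ℤ)+1-1))
        + |c| * lam ^ (2*d) * W1 k0 lam (u t) * (cf t ((n:ℤ)+1) + cf t ((n:ℤ)+1-2)) := by
      intro n _
      refine le_trans (hterm t ht n) ?_
      have g1 : 2 * (q t ((n:ℤ)+1) * q t ((n:ℤ)+1+2)) ≤ cf t ((n:ℤ)+1) + cf t ((n:ℤ)+1+2) := by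
        rw [← hq2, ← hq2]
        nlinarith [sq_nonneg (q t ((n:ℤ)+1) - q t ((n:ℤ)+1+2))]
      have g2 : 2 * (q t ((n:ℤ)+1) * q t ((n:ℤ)+1-1)) ≤ cf t ((n:ℤ)+1) + cf t ((n:ℤ)+1-1) := by
        rw [← hq2, ← hq2]
        nlinarith [sq_nonneg (q t ((n:ℤ)+1) - q t ((n:ℤ)+1-1))]
      have g3 : 2 * (q t ((n:ℤ)+1) * q t ((n:ℤ)+1-2)) ≤ cf t ((n:ℤ)+1) + cf t ((n:ℤ)+1-2) := by
        rw [← hq2, ← hq2]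
        nlinarith [sq_nonneg (q t ((n:ℤ)+1) - q t ((n:ℤ)+1-2))]
      have c1 : 2 * |a| * W1 k0 lam (u t) * (q t ((n:ℤ)+1) * q t ((n:ℤ)+1+2))
          ≤ |a| * W1 k0 lam (u t) * (cf t ((n:ℤ)+1) + cf t ((n:ℤ)+1+2)) := by
        have h := mul_le_mul_of_nonneg_left g1 (mul_nonneg (abs_nonneg a) hW0')
        calc 2 * |a| * W1 k0 lam (u t) * (q t ((n:ℤ)+1) * q t ((n:ℤ)+1+2))
            = (|a| * W1 k0 lam (u t)) * (2 * (q t ((n:ℤ)+1) * q t ((n:ℤ)+1+2))) := by ring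
        _ ≤ (|a| * W1 k0 lam (u t)) * (cf t ((n:ℤ)+1) + cf t ((n:ℤ)+1+2)) := h
        _ = |a| * W1 k0 lam (u t) * (cf t ((n:ℤ)+1) + cf t ((n:ℤ)+1+2)) := by ring
      have c2 : 2 * |b| * lam ^ d * W1 k0 lam (u t) * (q t ((n:ℤ)+1) * q t ((n:ℤ)+1-1))
          ≤ |b| * lam ^ d * W1 k0 lam (u t) * (cf t ((n:ℤ)+1) + cf t ((n:ℤ)+1-1)) := by
        have h := mul_le_mul_of_nonneg_left g2
          (mul_nonneg (mul_nonneg (abs_nonneg b) hlamd) hW0')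
        calc 2 * |b| * lam ^ d * W1 k0 lam (u t) * (q t ((n:ℤ)+1) * q t ((n:ℤ)+1-1))
            = (|b| * lam ^ d * W1 k0 lam (u t)) * (2 * (q t ((n:ℤ)+1) * q t ((n:ℤ)+1-1))) := by
              ring
        _ ≤ (|b| * lam ^ d * W1 k0 lam (u t)) * (cf t ((n:ℤ)+1) + cf t ((n:ℤ)+1-1)) := h
        _ = |b| * lam ^ d * W1 k0 lam (u t) * (cf t ((n:ℤ)+1) + cf t ((n:ℤ)+1-1)) := by ring
      have c3 : 2 * |c| * lam ^ (2*d) * W1 k0 lam (u t) * (q t ((n:ℤ)+1) * q t ((n:ℤ)+1-2))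
          ≤ |c| * lam ^ (2*d) * W1 k0 lam (u t) * (cf t ((n:ℤ)+1) + cf t ((n:ℤ)+1-2)) := by
        have h := mul_le_mul_of_nonneg_left g3
          (mul_nonneg (mul_nonneg (abs_nonneg c) hlam2d) hW0')
        calc 2 * |c| * lam ^ (2*d) * W1 k0 lam (u t) * (q t ((n:ℤ)+1) * q t ((n:ℤ)+1-2))
            = (|c| * lam ^ (2*d) * W1 k0 lam (u t)) * (2 * (q t ((n:ℤ)+1) * q t ((n:ℤ)+1-2))) := by
              ring
        _ ≤ (|c| * lam ^ (2*d) * W1 k0 lam (u t)) * (cf t ((n:ℤ)+1) + cf t ((n:ℤ)+1-2)) := h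
        _ = |c| * lam ^ (2*d) * W1 k0 lam (u t) * (cf t ((n:ℤ)+1) + cf t ((n:ℤ)+1-2)) := by ring
      linarith
    calc ∑ n ∈ Finset.range N, Dt t n
        ≤ ∑ n ∈ Finset.range N,
          (|a| * W1 k0 lam (u t) * (cf t ((n:ℤ)+1) + cf t ((n:ℤ)+1+2))
            + |b| * lam ^ d * W1 k0 lam (u t) * (cf t ((n:ℤ)+1) + cf t ((n:ℤ)+1-1))
            + |c| * lam ^ (2*d) * W1 k0 lam (u t) * (cf t ((n:ℤ)+1) + cf t ((n:ℤ)+1-2))) :=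
          Finset.sum_le_sum step
    _ = |a| * W1 k0 lam (u t) *
          ((∑ n ∈ Finset.range N, cf t ((n:ℤ)+1)) + ∑ n ∈ Finset.range N, cf t ((n:ℤ)+1+2))
        + |b| * lam ^ d * W1 k0 lam (u t) *
          ((∑ n ∈ Finset.range N, cf t ((n:ℤ)+1)) + ∑ n ∈ Finset.range N, cf t ((n:ℤ)+1-1))
        + |c| * lam ^ (2*d) * W1 k0 lam (u t) *
          ((∑ n ∈ Finset.range N, cf t ((n:ℤ)+1)) + ∑ n ∈ Finset.range N, cf t ((n:ℤ)+1-2)) := by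
        simp only [Finset.sum_add_distrib, Finset.mul_sum, mul_add]
    _ ≤ |a| * W1 k0 lam (u t) * (y t + y t)
        + |b| * lam ^ d * W1 k0 lam (u t) * (y t + y t)
        + |c| * lam ^ (2*d) * W1 k0 lam (u t) * (y t + y t) := by
        refine add_le_add (add_le_add ?_ ?_) ?_
        · exact mul_le_mul_of_nonneg_left (add_le_add S0 S2)
            (mul_nonneg (abs_nonneg a) hW0')
        · exact mul_le_mul_of_nonneg_left (add_le_add S0 Sm1)
            (mul_nonneg (mul_nonneg (abs_nonneg b) hlamd) hW0')
        · exact mul_le_mul_of_nonneg_left (add_le_add S0 Sm2)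
            (mul_nonneg (mul_nonneg (abs_nonneg c) hlam2d) hW0')
    _ = (Kc - 1) * (W1 k0 lam (u t) * y t) := by simp only [hKcdef]; ring
    _ ≤ Kc * (W1 k0 lam (u t) * y t) := by
        have := mul_nonneg hW0' (hy0 t)
        linarith
  -- continuity of the nonlinear term and of the derivative terms
  have hsBcont : ∀ m : ℤ, ContinuousOn (fun τ => sB a b c k0 lam (u τ) m) Ts := by
    intro m
    unfold sB
    simp only [← Complex.star_def]
    have h1 := hucont (m+2); have h2 := hucont (m+1); have h3 := hucont (m-1)
    have h4 := hucont (m-2)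
    fun_prop
  have hDtcont : ∀ N : ℕ, ContinuousOn (fun τ => ∑ n ∈ Finset.range N, Dt τ n) Ts := by
    intro N
    apply continuousOn_finset_sum
    intro n _
    simp only [hDtdef]
    have h1 := hucont ((n:ℤ)+1)
    have h2 := hsBcont ((n:ℤ)+1)
    fun_prop
  -- partial sums have the expected derivative
  have hSNderiv : ∀ N : ℕ, ∀ τ ∈ Ts, HasDerivAt (fun σ => ∑ n ∈ Finset.range N, E σ n)
      (∑ n ∈ Finset.range N, Dt τ n) τ := by
    intro N τ hτ
    apply HasDerivAt.fun_sum
    intro n _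
    have hu := (hde τ hτ).2 ((n:ℤ)+1) (by omega)
    have h := (hasDerivAt_norm_sq' hu).const_mul ((kk k0 lam ((n:ℤ)+1)) ^ (2*d))
    simp only [hDtdef, hEdef]
    convert h using 1
  -- integrability of the various integrands
  have hIccTs : ∀ {s t : ℝ}, 0 ≤ s → t < Tstar → Set.Icc s t ⊆ Ts := by
    intro s t hs ht x hx
    exact ⟨le_trans hs hx.1, lt_of_le_of_lt hx.2 ht⟩
  have hWaem : ∀ s t : ℝ, 0 ≤ s → t < Tstar →
      AEMeasurable (fun τ => W1 k0 lam (u τ))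
        (MeasureTheory.volume.restrict (Set.Icc s t)) := by
    intro s t hs ht
    have : (fun τ => W1 k0 lam (u τ))
        = fun τ => ⨆ n : ℕ, kk k0 lam ((n : ℤ) + 1) * ‖u τ ((n : ℤ) + 1)‖ := rfl
    rw [this]
    apply AEMeasurable.iSup
    intro n
    exact ((continuousOn_const.mul ((hucont _).norm)).mono (hIccTs hs ht)).aemeasurable
      measurableSet_Icc
  have hbound : ∀ s t : ℝ, 0 ≤ s → t < Tstar → ∃ C : ℝ, 0 ≤ C ∧
      ∀ τ ∈ Set.Icc s t, W1 k0 lam (u τ) ≤ C ∧ y τ ≤ C := by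
    intro s t hs ht
    obtain ⟨B, hB⟩ := isCompact_Icc.bddAbove_image (hyCont.mono (hIccTs hs ht))
    set B' := max B 0 with hB'
    refine ⟨max (kk k0 lam 1 ^ (1 - d) * Real.sqrt B') B', le_max_of_le_right (le_max_right _ _), ?_⟩
    intro τ hτ
    have hyB : y τ ≤ B' := le_max_of_le_left (hB ⟨τ, hτ, rfl⟩)
    constructor
    · refine le_max_of_le_left ?_
      refine le_trans (hWle τ (hIccTs hs ht hτ)) ?_
      exact mul_le_mul_of_nonneg_left (Real.sqrt_le_sqrt hyB)
        (Real.rpow_nonneg (hknn 1) _)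
    · exact le_max_of_le_right hyB
  have hIntW : ∀ s t : ℝ, 0 ≤ s → s ≤ t → t < Tstar →
      IntervalIntegrable (fun τ => W1 k0 lam (u τ)) MeasureTheory.volume s t := by
    intro s t hs hst ht
    rw [intervalIntegrable_iff', Set.uIcc_of_le hst]
    obtain ⟨C, hC0, hC⟩ := hbound s t hs ht
    apply MeasureTheory.Integrable.mono'
      ((MeasureTheory.integrableOn_const_iff (C := C)).mpr (Or.inr measure_Icc_lt_top))
      (hWaem s t hs ht).aestronglyMeasurable
    rw [MeasureTheory.ae_restrict_iff' measurableSet_Icc]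
    filter_upwards with τ hτ
    rw [Real.norm_eq_abs, _root_.abs_of_nonneg (hW0 τ)]
    exact (hC τ hτ).1
  have hIntWy : ∀ s t : ℝ, 0 ≤ s → s ≤ t → t < Tstar →
      IntervalIntegrable (fun τ => Kc * (W1 k0 lam (u τ) * y τ)) MeasureTheory.volume s t := by
    intro s t hs hst ht
    rw [intervalIntegrable_iff', Set.uIcc_of_le hst]
    obtain ⟨C, hC0, hC⟩ := hbound s t hs ht
    have hmeas : AEMeasurable (fun τ => Kc * (W1 k0 lam (u τ) * y τ))
        (MeasureTheory.volume.restrict (Set.Icc s t)) :=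
      aemeasurable_const.mul ((hWaem s t hs ht).mul
        (((hyCont.mono (hIccTs hs ht))).aemeasurable measurableSet_Icc))
    apply MeasureTheory.Integrable.mono'
      ((MeasureTheory.integrableOn_const_iff (C := Kc * (C * C))).mpr (Or.inr measure_Icc_lt_top))
      hmeas.aestronglyMeasurable
    rw [MeasureTheory.ae_restrict_iff' measurableSet_Icc]
    filter_upwards with τ hτ
    rw [Real.norm_eq_abs, _root_.abs_of_nonneg (mul_nonneg hKc0 (mul_nonneg (hW0 τ) (hy0 τ)))]
    refine mul_le_mul_of_nonneg_left ?_ hKc0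
    exact mul_le_mul (hC τ hτ).1 (hC τ hτ).2 (hy0 τ) hC0
  -- the key integral inequality
  have hkey : ∀ s t : ℝ, 0 ≤ s → s ≤ t → t < Tstar →
      y t ≤ y s + ∫ τ in s..t, Kc * (W1 k0 lam (u τ) * y τ) := by
    intro s t hs hst ht
    have hsTs : s ∈ Ts := ⟨hs, lt_of_le_of_lt hst ht⟩
    have htTs : t ∈ Ts := ⟨le_trans hs hst, ht⟩
    have hsub : Set.uIcc s t ⊆ Ts := by
      rw [Set.uIcc_of_le hst]; exact hIccTs hs ht
    have key : ∀ N : ℕ, ∑ n ∈ Finset.range N, E t n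
        ≤ y s + ∫ τ in s..t, Kc * (W1 k0 lam (u τ) * y τ) := by
      intro N
      have hftc := intervalIntegral.integral_eq_sub_of_hasDerivAt
        (f := fun σ => ∑ n ∈ Finset.range N, E σ n)
        (f' := fun τ => ∑ n ∈ Finset.range N, Dt τ n)
        (fun x hx => hSNderiv N x (hsub hx))
        (((hDtcont N).mono hsub).intervalIntegrable)
      have hmono : ∫ τ in s..t, (∑ n ∈ Finset.range N, Dt τ n)
          ≤ ∫ τ in s..t, Kc * (W1 k0 lam (u τ) * y τ) := by
        apply intervalIntegral.integral_mono_on hst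
          (((hDtcont N).mono hsub).intervalIntegrable) (hIntWy s t hs hst ht)
        intro x hx
        exact hDsum x (hIccTs hs ht hx) N
      have hps : ∑ n ∈ Finset.range N, E s n ≤ y s :=
        Summable.sum_le_tsum _ (fun i _ => hE0 s i) (hEsum s hsTs)
      linarith
    exact le_of_tendsto' (((hEsum t htTs).hasSum.tendsto_sum_nat)) key
  -- additivity and monotonicity of the primitive of the w^{1,∞} norm
  have hIadd : ∀ s t : ℝ, 0 ≤ s → s ≤ t → t < Tstar →
      (∫ τ in (0:ℝ)..t, W1 k0 lam (u τ))
        = (∫ τ in (0:ℝ)..s, W1 k0 lam (u τ)) + ∫ τ in s..t, W1 k0 lam (u τ) := by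
    intro s t hs hst ht
    exact (intervalIntegral.integral_add_adjacent_intervals
      (hIntW 0 s le_rfl hs (lt_of_le_of_lt hst ht)) (hIntW s t hs hst ht)).symm
  have hImono : ∀ s t : ℝ, 0 ≤ s → s ≤ t → t < Tstar →
      (∫ τ in (0:ℝ)..s, W1 k0 lam (u τ)) ≤ ∫ τ in (0:ℝ)..t, W1 k0 lam (u τ) := by
    intro s t hs hst ht
    have h2 : 0 ≤ ∫ τ in s..t, W1 k0 lam (u τ) :=
      intervalIntegral.integral_nonneg hst (fun x _ => hW0 x)
    rw [hIadd s t hs hst ht]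
    linarith
  -- core claim: the primitive is unbounded on [0, T*)
  have core : ∀ M : ℝ, ∃ t ∈ Ts, M < ∫ τ in (0:ℝ)..t, W1 k0 lam (u τ) := by
    intro M
    by_contra hcon
    push_neg at hcon
    have hne : ((fun t => ∫ τ in (0:ℝ)..t, W1 k0 lam (u τ)) '' Ts).Nonempty :=
      ⟨_, ⟨0, ⟨le_rfl, hTstar⟩, rfl⟩⟩
    have hbddI : BddAbove ((fun t => ∫ τ in (0:ℝ)..t, W1 k0 lam (u τ)) '' Ts) :=
      ⟨M, by rintro x ⟨τ, hτ, rfl⟩; exact hcon τ hτ⟩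
    set L := sSup ((fun t => ∫ τ in (0:ℝ)..t, W1 k0 lam (u τ)) '' Ts) with hLdef
    have hKcpos : (0:ℝ) < Kc := lt_of_lt_of_le one_pos hKc1
    have hKne : Kc ≠ 0 := ne_of_gt hKcpos
    have hL : L - 1/(2*Kc) < L := by
      have : 0 < 1/(2*Kc) := by positivity
      linarith
    obtain ⟨x, ⟨t₀, ht₀, rfl⟩, hx⟩ := exists_lt_of_lt_csSup hne hL
    have hId : ∀ τ, t₀ ≤ τ → τ < Tstar →
        (∫ σ in t₀..τ, W1 k0 lam (u σ)) ≤ 1/(2*Kc) := by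
      intro τ h1 h2
      have ha := hIadd t₀ τ ht₀.1 h1 h2
      have hb : (∫ σ in (0:ℝ)..τ, W1 k0 lam (u σ)) ≤ L :=
        le_csSup hbddI ⟨τ, ⟨le_trans ht₀.1 h1, h2⟩, rfl⟩
      linarith
    have hybound : ∀ t, t₀ ≤ t → t < Tstar → y t ≤ 2 * y t₀ := by
      intro t h1 h2
      have hIcc : Set.Icc t₀ t ⊆ Ts := hIccTs ht₀.1 h2
      have hzbdd : BddAbove (y '' Set.Icc t₀ t) :=
        isCompact_Icc.bddAbove_image (hyCont.mono hIcc)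
      have hzne : (y '' Set.Icc t₀ t).Nonempty := ⟨y t₀, ⟨t₀, ⟨le_rfl, h1⟩, rfl⟩⟩
      set z := sSup (y '' Set.Icc t₀ t) with hzdef
      have hyz : ∀ τ ∈ Set.Icc t₀ t, y τ ≤ z := fun τ hτ => le_csSup hzbdd ⟨τ, hτ, rfl⟩
      have hz0 : 0 ≤ z := le_trans (hy0 t₀) (hyz t₀ ⟨le_rfl, h1⟩)
      have hstep : ∀ τ ∈ Set.Icc t₀ t, y τ ≤ y t₀ + z/2 := by
        intro τ hτ
        have hτT : τ < Tstar := lt_of_le_of_lt hτ.2 h2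
        have hk := hkey t₀ τ ht₀.1 hτ.1 hτT
        have hibd : (∫ σ in t₀..τ, Kc * (W1 k0 lam (u σ) * y σ))
            ≤ ∫ σ in t₀..τ, (Kc * z) * W1 k0 lam (u σ) := by
          apply intervalIntegral.integral_mono_on hτ.1 (hIntWy t₀ τ ht₀.1 hτ.1 hτT)
            ((hIntW t₀ τ ht₀.1 hτ.1 hτT).const_mul (Kc * z))
          intro x hx
          have hyx : y x ≤ z := hyz x ⟨hx.1, le_trans hx.2 hτ.2⟩
          have hh := mul_le_mul_of_nonneg_left hyx (mul_nonneg hKc0 (hW0 x))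
          calc Kc * (W1 k0 lam (u x) * y x) = (Kc * W1 k0 lam (u x)) * y x := by ring
          _ ≤ (Kc * W1 k0 lam (u x)) * z := hh
          _ = (Kc * z) * W1 k0 lam (u x) := by ring
        have heqc : (∫ σ in t₀..τ, (Kc * z) * W1 k0 lam (u σ))
            = (Kc * z) * ∫ σ in t₀..τ, W1 k0 lam (u σ) :=
          intervalIntegral.integral_const_mul _ _
        have h3 : (Kc * z) * (∫ σ in t₀..τ, W1 k0 lam (u σ)) ≤ (Kc * z) * (1/(2*Kc)) :=
          mul_le_mul_of_nonneg_left (hId τ hτ.1 hτT) (mul_nonneg hKc0 hz0)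
        have h4 : (Kc * z) * (1/(2*Kc)) = z/2 := by
          field_simp
        calc y τ ≤ y t₀ + ∫ σ in t₀..τ, Kc * (W1 k0 lam (u σ) * y σ) := hk
        _ ≤ y t₀ + ∫ σ in t₀..τ, (Kc * z) * W1 k0 lam (u σ) := by linarith [hibd]
        _ = y t₀ + (Kc * z) * ∫ σ in t₀..τ, W1 k0 lam (u σ) := by rw [heqc]
        _ ≤ y t₀ + (Kc * z) * (1/(2*Kc)) := by linarith [h3]
        _ = y t₀ + z/2 := by rw [h4]
      have hzle : z ≤ y t₀ + z/2 := by
        apply csSup_le hzne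
        rintro x ⟨τ, hτ, rfl⟩
        exact hstep τ hτ
      have hz2 : z ≤ 2 * y t₀ := by linarith
      exact le_trans (hyz t ⟨h1, le_rfl⟩) hz2
    obtain ⟨B0, hB0⟩ :=
      isCompact_Icc.bddAbove_image (hyCont.mono (hIccTs le_rfl ht₀.2) :
        ContinuousOn y (Set.Icc 0 t₀))
    set BB := max B0 (2 * y t₀) with hBBdef
    have hyBB : ∀ t ∈ Ts, y t ≤ BB := by
      intro t ht
      rcases le_total t t₀ with h | h
      · exact le_max_of_le_left (hB0 ⟨t, ⟨ht.1, h⟩, rfl⟩)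
      · exact le_max_of_le_right (hybound t h ht.2)
    obtain ⟨t₁, ht₁, hgt⟩ := hmax (Real.sqrt BB)
    have hAH : AH k0 lam d (u t₁) = Real.sqrt (y t₁) := rfl
    rw [hAH] at hgt
    have hsq : Real.sqrt (y t₁) ≤ Real.sqrt BB := Real.sqrt_le_sqrt (hyBB t₁ ht₁)
    linarith
  constructor
  · rw [tendsto_atTop]
    intro M
    obtain ⟨t₀, ht₀, hb⟩ := core M
    filter_upwards [Ioo_mem_nhdsLT_of_mem (⟨ht₀.2, le_rfl⟩ : Tstar ∈ Set.Ioc t₀ Tstar)]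
      with x hx
    exact le_trans hb.le (hImono t₀ x ht₀.1 hx.1.le hx.2)
  · intro M
    by_contra hcon
    push_neg at hcon
    have hM0 : 0 ≤ M := le_trans (hW0 0) (hcon 0 ⟨le_rfl, hTstar⟩)
    obtain ⟨t, ht, hgt⟩ := core (M * Tstar)
    have hle : (∫ τ in (0:ℝ)..t, W1 k0 lam (u τ)) ≤ M * t := by
      have h1 : (∫ τ in (0:ℝ)..t, W1 k0 lam (u τ)) ≤ ∫ τ in (0:ℝ)..t, M := by
        apply intervalIntegral.integral_mono_on ht.1 (hIntW 0 t le_rfl ht.1 ht.2)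
          intervalIntegrable_const
        intro x hx
        exact hcon x ⟨hx.1, lt_of_le_of_lt hx.2 ht.2⟩
      have h2 : (∫ τ in (0:ℝ)..t, (M:ℝ)) = M * t := by
        rw [intervalIntegral.integral_const, smul_eq_mul]
        ring
      linarith
    have hfin : M * t ≤ M * Tstar := mul_le_mul_of_nonneg_left ht.2.le hM0
    linarith
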